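/- Let n ≥ 4, let C be a totally traceless generalized curvature tensor on Minkowski space ℝ^n, let u be a unit timelike vector such that C is Weyl compatible with u, and let Γ be the associated tensor built from C, its electric part E, u and η. Then Γ² = C² − 4·((n−2)/(n−3))·E², where T² denotes the full η-self-contraction of a tensor T. -/

import Mathlib

open Finset

noncomputable section

/-- A 4-argument real tensor on `ℝ^n`. -/
abbrev Tensor4 (n : ℕ) :=
  (Fin n → ℝ) → (Fin n → ℝ) → (Fin n → ℝ) → (Fin n → ℝ) → ℝ

/-- Components of the Minkowski metric `diag(-1,1,…,1)` of signature `(-,+,…,+)`.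
Since this matrix is its own inverse, it also gives the components `η^{ab}`
of the inverse metric. -/
def ηm {n : ℕ} (a b : Fin n) : ℝ :=
  if a = b then (if (a : ℕ) = 0 then -1 else 1) else 0

/-- The Minkowski bilinear form `η` of signature `(-,+,…,+)` on `ℝ^n`. -/
def ηf {n : ℕ} (x y : Fin n → ℝ) : ℝ :=
  ∑ i : Fin n, (if (i : ℕ) = 0 then (-1 : ℝ) else 1) * x i * y i

/-- The standard basis `(e_a)` of `ℝ^n`. -/
def stdb {n : ℕ} (a : Fin n) : Fin n → ℝ := fun i => if i = a then 1 else 0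

/-- Multilinearity of a 4-argument map. -/
def Multilinear4 {n : ℕ} (C : Tensor4 n) : Prop :=
  (∀ y z w, IsLinearMap ℝ fun x => C x y z w) ∧
  (∀ x z w, IsLinearMap ℝ fun y => C x y z w) ∧
  (∀ x y w, IsLinearMap ℝ fun z => C x y z w) ∧
  (∀ x y z, IsLinearMap ℝ fun w => C x y z w)

/-- Bilinearity of a 2-argument map. -/
def Bilinear2 {n : ℕ} (S : (Fin n → ℝ) → (Fin n → ℝ) → ℝ) : Prop :=
  (∀ y, IsLinearMap ℝ fun x => S x y) ∧ (∀ x, IsLinearMap ℝ fun y => S x y)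

/-- A generalized curvature tensor: a multilinear map with the algebraic
symmetries of the Riemann tensor (antisymmetry in the first and the last pair,
pair-exchange symmetry, and the first Bianchi identity). -/
def IsGenCurv {n : ℕ} (C : Tensor4 n) : Prop :=
  Multilinear4 C ∧
  (∀ x y z w, C x y z w = - C y x z w) ∧
  (∀ x y z w, C x y z w = - C x y w z) ∧
  (∀ x y z w, C x y z w = C z w x y) ∧
  (∀ x y z w, C x y z w + C y z x w + C z x y w = 0)

/-- Total tracelessness: `Σ_{a,b} η^{ab} C(e_a, x, e_b, y) = 0`. -/
def TotallyTraceless {n : ℕ} (C : Tensor4 n) : Prop :=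
  ∀ x y, (∑ a, ∑ b, ηm a b * C (stdb a) x (stdb b) y) = 0

/-- Weyl compatibility of `C` with the vector `u`. -/
def WeylCompatible {n : ℕ} (C : Tensor4 n) (u : Fin n → ℝ) : Prop :=
  ∀ x y z w,
    ηf u x * C y z w u + ηf u y * C z x w u + ηf u z * C x y w u = 0

/-- The electric part of `C` relative to `u`: `E(x,y) = C(u,x,y,u)`. -/
def electric {n : ℕ} (C : Tensor4 n) (u : Fin n → ℝ)
    (x y : Fin n → ℝ) : ℝ :=
  C u x y u

/-- Full η-self-contraction `T² = Σ T_{abcd} T^{abcd}` of a 4-tensor. -/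
def sq4 {n : ℕ} (T : Tensor4 n) : ℝ :=
  ∑ a, ∑ a', ∑ b, ∑ b', ∑ c, ∑ c', ∑ d, ∑ d',
    ηm a a' * ηm b b' * ηm c c' * ηm d d' *
      T (stdb a) (stdb b) (stdb c) (stdb d) *
      T (stdb a') (stdb b') (stdb c') (stdb d')

/-- Full η-self-contraction `S² = Σ S_{ab} S^{ab}` of a 2-tensor. -/
def sq2 {n : ℕ} (S : (Fin n → ℝ) → (Fin n → ℝ) → ℝ) : ℝ :=
  ∑ a, ∑ a', ∑ b, ∑ b',
    ηm a a' * ηm b b' * S (stdb a) (stdb b) * S (stdb a') (stdb b')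

/-- The tensor `Γ` associated with `C`, its electric part `E`, `u` and `η`. -/
def Γt {n : ℕ} (C : Tensor4 n) (u : Fin n → ℝ) : Tensor4 n :=
  fun x y z w =>
    C x y z w
      - ((n : ℝ) - 2) / ((n : ℝ) - 3) *
          (ηf u x * ηf u w * electric C u y z - ηf u y * ηf u w * electric C u x z
            - ηf u x * ηf u z * electric C u y w + ηf u y * ηf u z * electric C u x w)
      - 1 / ((n : ℝ) - 3) *
          (ηf x w * electric C u y z - ηf y w * electric C u x z
            - ηf x z * electric C u y w + ηf y z * electric C u x w)

/-! The components `Γ_{abcd}` are `C_{abcd} - W_{abcd}`, where `W` is the Kulkarni–Nomizu type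
product of `P = k u♭⊗u♭ + m η` (with `k = (n-2)/(n-3)`, `m = 1/(n-3)`) and the electric part `E`.
Whenever a tensor `X` is antisymmetric in both pairs and its `P`-contraction over the outer slots
is `v E`, the full contraction `X · W` equals `4 v E²`. Tracelessness of `C` together with
`E(u,·) = E(·,u) = 0`, `tr E = 0` and `η(u,u) = -1` give `v = k` both for `X = C` and for `X = W`,
the latter through the identity `k² - 2km + (n-2)m² = k`. Hence
`Γ² = C² - 2 C·W + W·W = C² - 8kE² + 4kE²`. -/

def ηd {n : ℕ} (a : Fin n) : ℝ := if (a : ℕ) = 0 then -1 else 1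

section Metric

variable {n : ℕ}

lemma ηd_mul_self (a : Fin n) : ηd a * ηd a = 1 := by
  unfold ηd; split_ifs <;> norm_num

lemma ηm_eq_ite (a b : Fin n) : ηm a b = if a = b then ηd a else 0 := rfl

lemma ηm_comm (a b : Fin n) : ηm a b = ηm b a := by
  rcases eq_or_ne a b with rfl | h
  · rfl
  · simp [ηm, h, h.symm]

lemma sum_ηm_mul (a : Fin n) (f : Fin n → ℝ) : ∑ b, ηm a b * f b = ηd a * f a := by
  simp [ηm_eq_ite, ite_mul]

lemma sum_ηd_mul_ηm_mul (a : Fin n) (f : Fin n → ℝ) :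
    ∑ b, ηd b * (ηm a b * f b) = f a := by
  simp [ηm_eq_ite, ← mul_assoc, ηd_mul_self]

lemma ηf_eq_sum (x y : Fin n → ℝ) : ηf x y = ∑ i, ηd i * (x i * y i) :=
  sum_congr rfl fun _ _ => by rw [ηd, mul_assoc]

lemma ηf_stdb_right (x : Fin n → ℝ) (a : Fin n) : ηf x (stdb a) = ηd a * x a := by
  simp [ηf_eq_sum, stdb]

lemma ηf_stdb_stdb (a b : Fin n) : ηf (stdb a) (stdb b) = ηm a b := by
  rw [ηf_stdb_right, ηm_eq_ite]
  by_cases h : a = b <;> simp [stdb, h, Ne.symm]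

lemma IsLinearMap.sum_mul_apply_stdb {f : (Fin n → ℝ) → ℝ} (hf : IsLinearMap ℝ f)
    (x : Fin n → ℝ) : ∑ a, x a * f (stdb a) = f x := by
  have h := (hf.mk' f).pi_apply_eq_sum_univ x
  simp only [IsLinearMap.mk'_apply, smul_eq_mul] at h
  rw [h]
  congr! 3 with a
  ext j
  simp [stdb, eq_comm]

end Metric

section Contraction

variable {n : ℕ}

def comp4 (T : Tensor4 n) (a b c d : Fin n) : ℝ := T (stdb a) (stdb b) (stdb c) (stdb d)

def comp2 (S : (Fin n → ℝ) → (Fin n → ℝ) → ℝ) (a b : Fin n) : ℝ := S (stdb a) (stdb b)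

def contract4 (X Y : Fin n → Fin n → Fin n → Fin n → ℝ) : ℝ :=
  ∑ a, ∑ b, ∑ c, ∑ d, ηd a * ηd b * ηd c * ηd d * (X a b c d * Y a b c d)

def contract2 (S T : Fin n → Fin n → ℝ) : ℝ :=
  ∑ a, ∑ b, ηd a * ηd b * (S a b * T a b)

def contract14 (q : Fin n → Fin n → ℝ) (X : Fin n → Fin n → Fin n → Fin n → ℝ)
    (b c : Fin n) : ℝ :=
  ∑ a, ∑ d, ηd a * ηd d * q a d * X a b c d

def kulkarniNomizu (q E : Fin n → Fin n → ℝ) (a b c d : Fin n) : ℝ :=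
  q a d * E b c - q b d * E a c - q a c * E b d + q b c * E a d

lemma sq4_eq_contract4 (T : Tensor4 n) : sq4 T = contract4 (comp4 T) (comp4 T) := by
  simp only [sq4, contract4, comp4, ηm_eq_ite, ite_mul, zero_mul, mul_ite, mul_zero,
    sum_ite_irrel, sum_ite_eq, mem_univ, if_true, sum_const_zero]
  refine sum_congr rfl fun a _ => sum_congr rfl fun b _ =>
    sum_congr rfl fun c _ => sum_congr rfl fun d _ => by ring

lemma sq2_eq_contract2 (S : (Fin n → ℝ) → (Fin n → ℝ) → ℝ) :
    sq2 S = contract2 (comp2 S) (comp2 S) := by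
  simp only [sq2, contract2, comp2, ηm_eq_ite, ite_mul, zero_mul, mul_ite, mul_zero,
    sum_ite_irrel, sum_ite_eq, mem_univ, if_true, sum_const_zero]
  refine sum_congr rfl fun a _ => sum_congr rfl fun b _ => by ring

variable (X Y Z : Fin n → Fin n → Fin n → Fin n → ℝ)

lemma contract4_comm : contract4 X Y = contract4 Y X := by
  simp only [contract4, mul_comm (X _ _ _ _)]

lemma contract4_add_right : contract4 X (Y + Z) = contract4 X Y + contract4 X Z := by
  simp only [contract4, Pi.add_apply, mul_add, sum_add_distrib]

lemma contract4_sub_right : contract4 X (Y - Z) = contract4 X Y - contract4 X Z := by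
  simp only [contract4, Pi.sub_apply, mul_sub, sum_sub_distrib]

lemma contract4_neg_left : contract4 (-X) Y = -contract4 X Y := by
  simp only [contract4, Pi.neg_apply, neg_mul, mul_neg, sum_neg_distrib]

lemma contract4_sub_self :
    contract4 (X - Y) (X - Y) = contract4 X X - 2 * contract4 X Y + contract4 Y Y := by
  rw [contract4_sub_right, contract4_comm (X - Y), contract4_comm (X - Y),
    contract4_sub_right, contract4_sub_right, contract4_comm Y X]
  ring

lemma contract4_swap12 :
    contract4 X (fun a b c d => Y b a c d) = contract4 (fun a b c d => X b a c d) Y := by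
  rw [contract4, sum_comm]
  exact sum_congr rfl fun _ _ => sum_congr rfl fun _ _ =>
    sum_congr rfl fun _ _ => sum_congr rfl fun _ _ => by ring

lemma contract4_swap34 :
    contract4 X (fun a b c d => Y a b d c) = contract4 (fun a b c d => X a b d c) Y := by
  refine sum_congr rfl fun _ _ => sum_congr rfl fun _ _ => ?_
  rw [sum_comm]
  exact sum_congr rfl fun _ _ => sum_congr rfl fun _ _ => by ring

lemma contract4_eq_contract2_contract14 (q E : Fin n → Fin n → ℝ) :
    contract4 X (fun a b c d => q a d * E b c) = contract2 (contract14 q X) E := by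
  rw [contract4, sum_comm]
  refine sum_congr rfl fun b _ => ?_
  rw [sum_comm]
  refine sum_congr rfl fun c _ => ?_
  simp only [contract14, sum_mul, mul_sum]
  exact sum_congr rfl fun _ _ => sum_congr rfl fun _ _ => by ring

lemma kulkarniNomizu_swap12 (q E : Fin n → Fin n → ℝ) (a b c d : Fin n) :
    kulkarniNomizu q E b a c d = -kulkarniNomizu q E a b c d := by
  unfold kulkarniNomizu; ring

lemma kulkarniNomizu_swap34 (q E : Fin n → Fin n → ℝ) (a b c d : Fin n) :
    kulkarniNomizu q E a b d c = -kulkarniNomizu q E a b c d := by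
  unfold kulkarniNomizu; ring

lemma contract4_kulkarniNomizu {q E : Fin n → Fin n → ℝ} {v : ℝ}
    (hX12 : ∀ a b c d, X b a c d = -X a b c d) (hX34 : ∀ a b c d, X a b d c = -X a b c d)
    (hK : contract14 q X = v • E) :
    contract4 X (kulkarniNomizu q E) = 4 * v * contract2 E E := by
  set Y : Fin n → Fin n → Fin n → Fin n → ℝ := fun a b c d => q a d * E b c
  have hX12' : (fun a b c d => X b a c d) = -X := by ext; exact hX12 ..
  have hX34' : (fun a b c d => X a b d c) = -X := by ext; exact hX34 ..
  have hY : kulkarniNomizu q E = Y - (fun a b c d => Y b a c d) - (fun a b c d => Y a b d c)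
      + (fun a b c d => Y b a d c) := by
    ext; simp only [kulkarniNomizu, Y, Pi.add_apply, Pi.sub_apply]
  have hXY : contract4 X Y = v * contract2 E E := by
    simp only [Y, contract4_eq_contract2_contract14, hK, contract2, Pi.smul_apply, smul_eq_mul,
      mul_sum]
    exact sum_congr rfl fun _ _ => sum_congr rfl fun _ _ => by ring
  rw [hY, contract4_add_right, contract4_sub_right, contract4_sub_right, contract4_swap12 X Y,
    contract4_swap12 X (fun a b c d => Y a b d c), hX12', contract4_neg_left,
    contract4_neg_left, contract4_swap34 X Y, hX34', contract4_neg_left, hXY]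
  ring

end Contraction

def kCoeff (n : ℕ) : ℝ := ((n : ℝ) - 2) / ((n : ℝ) - 3)

def mCoeff (n : ℕ) : ℝ := 1 / ((n : ℝ) - 3)

/-- At `n = 3` both coefficients are `0` by the convention `x / 0 = 0`, and the identity
still holds. -/
lemma kCoeff_mCoeff_relation (n : ℕ) :
    kCoeff n * kCoeff n - 2 * kCoeff n * mCoeff n + ((n : ℝ) - 2) * (mCoeff n * mCoeff n)
      = kCoeff n := by
  unfold kCoeff mCoeff
  rcases eq_or_ne ((n : ℝ) - 3) 0 with h | h
  · simp [h]
  · field_simp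
    ring

/-- Lowered components `P_{ab} = k u_a u_b + m η_{ab}`. -/
def pTensor {n : ℕ} (u : Fin n → ℝ) (a b : Fin n) : ℝ :=
  kCoeff n * (ηd a * u a) * (ηd b * u b) + mCoeff n * ηm a b

section PTensor

variable {n : ℕ} (u : Fin n → ℝ)

lemma pTensor_comm (a b : Fin n) : pTensor u a b = pTensor u b a := by
  unfold pTensor; rw [ηm_comm]; ring

lemma sum_ηd_mul_pTensor_mul (a : Fin n) (f : Fin n → ℝ) :
    ∑ b, ηd b * pTensor u a b * f b
      = kCoeff n * (ηd a * u a) * ∑ b, u b * f b + mCoeff n * f a := by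
  have h : ∀ b, ηd b * pTensor u a b * f b
      = kCoeff n * (ηd a * u a) * (ηd b * ηd b * (u b * f b))
        + mCoeff n * (ηd b * (ηm a b * f b)) := fun b => by unfold pTensor; ring
  simp only [h, ηd_mul_self, one_mul, sum_add_distrib, ← mul_sum, sum_ηd_mul_ηm_mul]

lemma contract14_pTensor (X : Fin n → Fin n → Fin n → Fin n → ℝ) (b c : Fin n) :
    contract14 (pTensor u) X b c
      = kCoeff n * ∑ a, u a * ∑ d, u d * X a b c d + mCoeff n * ∑ a, ηd a * X a b c a := by
  have h : ∀ a, ∑ d, ηd a * ηd d * pTensor u a d * X a b c d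
      = ηd a * ∑ d, ηd d * pTensor u a d * X a b c d := fun a => by
    rw [mul_sum]; exact sum_congr rfl fun _ _ => by ring
  have h' : ∀ a, ηd a * (kCoeff n * (ηd a * u a) * ∑ d, u d * X a b c d + mCoeff n * X a b c a)
      = kCoeff n * (u a * ∑ d, u d * X a b c d) + mCoeff n * (ηd a * X a b c a) := fun a => by
    linear_combination (kCoeff n * u a * ∑ d, u d * X a b c d) * ηd_mul_self a
  simp only [contract14, h, sum_ηd_mul_pTensor_mul, h', sum_add_distrib, ← mul_sum]

variable {u} (hu : ηf u u = -1)
include hu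

lemma sum_mul_pTensor (a : Fin n) :
    ∑ b, u b * pTensor u a b = (mCoeff n - kCoeff n) * (ηd a * u a) := by
  have h : ∀ b, u b * pTensor u a b
      = kCoeff n * (ηd a * u a) * (ηd b * (u b * u b)) + mCoeff n * (ηm a b * u b) :=
    fun b => by unfold pTensor; ring
  simp only [h, sum_add_distrib, ← mul_sum, sum_ηm_mul, ← ηf_eq_sum, hu]
  ring

lemma sum_ηd_mul_pTensor_self : ∑ a, ηd a * pTensor u a a = mCoeff n * n - kCoeff n := by
  have h : ∀ a, ηd a * pTensor u a a = kCoeff n * (ηd a * (u a * u a)) + mCoeff n := fun a => by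
    rw [pTensor, ηm_eq_ite, if_pos rfl]
    linear_combination (kCoeff n * ηd a * (u a * u a) + mCoeff n) * ηd_mul_self a
  simp only [h, sum_add_distrib, ← mul_sum, ← ηf_eq_sum, hu, sum_const, card_univ,
    Fintype.card_fin, nsmul_eq_mul]
  ring

end PTensor

section Curvature

variable {n : ℕ} {C : Tensor4 n}

lemma TotallyTraceless.sum_ηd_mul (htr : TotallyTraceless C) (x y : Fin n → ℝ) :
    ∑ a, ηd a * C (stdb a) x (stdb a) y = 0 := by
  rw [← htr x y]
  exact sum_congr rfl fun a _ => (sum_ηm_mul a fun b => C (stdb a) x (stdb b) y).symm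

variable (hC : IsGenCurv C) (u : Fin n → ℝ)
include hC

lemma IsGenCurv.sum_mul_comp4_fst_fourth (b c : Fin n) :
    ∑ a, u a * ∑ d, u d * comp4 C a b c d = comp2 (electric C u) b c := by
  simp only [comp4, ((hC.1.2.2.2 _ _ _).sum_mul_apply_stdb u)]
  exact (hC.1.1 _ _ _).sum_mul_apply_stdb u

lemma IsGenCurv.sum_mul_comp2_electric_left (c : Fin n) :
    ∑ a, u a * comp2 (electric C u) a c = 0 := by
  simp only [comp2, electric, (hC.1.2.1 u (stdb c) u).sum_mul_apply_stdb u]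
  linarith [hC.2.1 u u (stdb c) u]

lemma IsGenCurv.sum_mul_comp2_electric_right (b : Fin n) :
    ∑ a, u a * comp2 (electric C u) b a = 0 := by
  simp only [comp2, electric, (hC.1.2.2.1 u (stdb b) u).sum_mul_apply_stdb u]
  linarith [hC.2.2.1 u (stdb b) u u]

lemma IsGenCurv.sum_ηd_mul_comp4_diag14 (htr : TotallyTraceless C) (b c : Fin n) :
    ∑ a, ηd a * comp4 C a b c a = 0 := by
  have h : ∀ a, ηd a * comp4 C a b c a = -(ηd a * C (stdb a) (stdb b) (stdb a) (stdb c)) :=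
    fun a => by rw [comp4, hC.2.2.1]; ring
  simp only [h, sum_neg_distrib, htr.sum_ηd_mul, neg_zero]

lemma IsGenCurv.sum_ηd_mul_comp2_electric_diag (htr : TotallyTraceless C) :
    ∑ a, ηd a * comp2 (electric C u) a a = 0 := by
  have h : ∀ a, ηd a * comp2 (electric C u) a a = -(ηd a * C (stdb a) u (stdb a) u) :=
    fun a => by rw [comp2, electric, hC.2.2.2.1, hC.2.2.1]; ring
  simp only [h, sum_neg_distrib, htr.sum_ηd_mul, neg_zero]

lemma IsGenCurv.contract14_pTensor_comp4 (htr : TotallyTraceless C) :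
    contract14 (pTensor u) (comp4 C) = kCoeff n • comp2 (electric C u) := by
  ext b c
  rw [contract14_pTensor, hC.sum_mul_comp4_fst_fourth, hC.sum_ηd_mul_comp4_diag14 htr]
  simp

end Curvature

def wTensor {n : ℕ} (C : Tensor4 n) (u : Fin n → ℝ) : Fin n → Fin n → Fin n → Fin n → ℝ :=
  kulkarniNomizu (pTensor u) (comp2 (electric C u))

lemma comp4_Γt {n : ℕ} (C : Tensor4 n) (u : Fin n → ℝ) :
    comp4 (Γt C u) = comp4 C - wTensor C u := by
  ext a b c d
  simp only [comp4, Γt, ηf_stdb_stdb]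
  simp only [Pi.sub_apply, comp4, wTensor, kulkarniNomizu, pTensor, comp2, kCoeff, mCoeff,
    ηf_stdb_right]
  ring

section WTensor

variable {n : ℕ} {C : Tensor4 n} {u : Fin n → ℝ} (hC : IsGenCurv C) (hu : ηf u u = -1)
include hC hu

lemma sum_mul_wTensor (a b c : Fin n) :
    ∑ d, u d * wTensor C u a b c d = (mCoeff n - kCoeff n)
      * (ηd a * u a * comp2 (electric C u) b c - ηd b * u b * comp2 (electric C u) a c) := by
  have h : ∀ d, u d * wTensor C u a b c d
      = u d * pTensor u a d * comp2 (electric C u) b c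
        - u d * pTensor u b d * comp2 (electric C u) a c
        - pTensor u a c * (u d * comp2 (electric C u) b d)
        + pTensor u b c * (u d * comp2 (electric C u) a d) := fun d => by
    unfold wTensor kulkarniNomizu; ring
  simp only [h, sum_add_distrib, sum_sub_distrib, ← sum_mul, ← mul_sum, sum_mul_pTensor hu,
    hC.sum_mul_comp2_electric_right]
  ring

lemma sum_ηd_mul_wTensor_diag14 (htr : TotallyTraceless C) (b c : Fin n) :
    ∑ a, ηd a * wTensor C u a b c a
      = (mCoeff n * n - 2 * mCoeff n - kCoeff n) * comp2 (electric C u) b c := by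
  have h : ∀ a, ηd a * wTensor C u a b c a
      = ηd a * pTensor u a a * comp2 (electric C u) b c
        - ηd a * pTensor u b a * comp2 (electric C u) a c
        - ηd a * pTensor u c a * comp2 (electric C u) b a
        + pTensor u b c * (ηd a * comp2 (electric C u) a a) := fun a => by
    rw [wTensor, kulkarniNomizu, pTensor_comm u c a]; ring
  simp only [h, sum_add_distrib, sum_sub_distrib, ← sum_mul, ← mul_sum,
    sum_ηd_mul_pTensor_self hu, sum_ηd_mul_pTensor_mul, hC.sum_mul_comp2_electric_left,
    hC.sum_mul_comp2_electric_right, hC.sum_ηd_mul_comp2_electric_diag u htr]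
  ring

lemma contract14_pTensor_wTensor (htr : TotallyTraceless C) :
    contract14 (pTensor u) (wTensor C u) = kCoeff n • comp2 (electric C u) := by
  ext b c
  have h : ∀ a, u a * ((mCoeff n - kCoeff n)
      * (ηd a * u a * comp2 (electric C u) b c - ηd b * u b * comp2 (electric C u) a c))
      = (mCoeff n - kCoeff n) * comp2 (electric C u) b c * (ηd a * (u a * u a))
        - (mCoeff n - kCoeff n) * (ηd b * u b) * (u a * comp2 (electric C u) a c) := fun a => by
    ring
  simp only [contract14_pTensor, sum_mul_wTensor hC hu, sum_ηd_mul_wTensor_diag14 hC hu htr, h,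
    sum_sub_distrib, ← mul_sum, ← ηf_eq_sum, hu, hC.sum_mul_comp2_electric_left,
    Pi.smul_apply, smul_eq_mul]
  linear_combination comp2 (electric C u) b c * kCoeff_mCoeff_relation n

end WTensor

theorem stmt_11_general {n : ℕ} (C : Tensor4 n)
    (hC : IsGenCurv C) (htr : TotallyTraceless C)
    (u : Fin n → ℝ) (hu : ηf u u = -1) :
    sq4 (Γt C u)
      = sq4 C - 4 * (((n : ℝ) - 2) / ((n : ℝ) - 3)) * sq2 (electric C u) := by
  have hCW : contract4 (comp4 C) (wTensor C u) = 4 * kCoeff n * sq2 (electric C u) := by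
    rw [sq2_eq_contract2]
    exact contract4_kulkarniNomizu _ (fun _ _ _ _ => hC.2.1 _ _ _ _)
      (fun _ _ _ _ => hC.2.2.1 _ _ _ _) (hC.contract14_pTensor_comp4 u htr)
  have hWW : contract4 (wTensor C u) (wTensor C u) = 4 * kCoeff n * sq2 (electric C u) := by
    rw [sq2_eq_contract2]
    exact contract4_kulkarniNomizu _ (kulkarniNomizu_swap12 _ _) (kulkarniNomizu_swap34 _ _)
      (contract14_pTensor_wTensor hC hu htr)
  rw [sq4_eq_contract4, comp4_Γt, contract4_sub_self, hCW, hWW, ← sq4_eq_contract4, kCoeff]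
  ring

/-- for `n ≥ 4`, a totally traceless generalized curvature tensor
`C` on Minkowski `ℝ^n` Weyl compatible with a unit timelike `u`,
`Γ² = C² − 4·((n−2)/(n−3))·E²`. -/
theorem stmt_11 {n : ℕ} (hn : 4 ≤ n) (C : Tensor4 n)
    (hC : IsGenCurv C) (htr : TotallyTraceless C)
    (u : Fin n → ℝ) (hu : ηf u u = -1) (hW : WeylCompatible C u) :
    sq4 (Γt C u)
      = sq4 C - 4 * (((n : ℝ) - 2) / ((n : ℝ) - 3)) * sq2 (electric C u) :=
  stmt_11_general C hC htr u hu
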